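/- Let t, y, v ∈ ℂ be constants. Let Ψ : {μ ∈ ℂ : Re μ > 0} → ℂ² be holomorphic and satisfy Ψ'(μ) = A(μ)·Ψ(μ), where A(μ) = (4μ⁴ + t + 2y²)·σ₃ − i·(4yμ² + t + 2y²)·σ₂ − (2vμ + 1/(2μ))·σ₁. Define Φ : ℂ \ (−∞,0] → ℂ² by Φ(λ) = diag(λ^{1/4}, λ^{−1/4}) · (1/√2)·(σ₃ + σ₁) · Ψ(λ^{1/2}), using principal branches of the powers. Then Φ is holomorphic on ℂ \ (−∞,0] and satisfies Φ'(λ) = [[−v, 2λ² + 2yλ + t + 2y²],[2(λ − y), v]] · Φ(λ) for all λ ∈ ℂ \ (−∞,0]. -/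

import Mathlib

open Matrix

noncomputable section

/-- The Pauli matrix σ₁. -/
def pauli1 : Matrix (Fin 2) (Fin 2) ℂ := !![0, 1; 1, 0]

/-- The Pauli matrix σ₂. -/
def pauli2 : Matrix (Fin 2) (Fin 2) ℂ := !![0, -Complex.I; Complex.I, 0]

/-- The Pauli matrix σ₃. -/
def pauli3 : Matrix (Fin 2) (Fin 2) ℂ := !![1, 0; 0, -1]

/-- The coefficient matrix `A(μ)` of the `λ`-equation of the PI Lax pair. -/
def laxA (y v t mu : ℂ) : Matrix (Fin 2) (Fin 2) ℂ :=
  (4 * mu ^ 4 + t + 2 * y ^ 2) • pauli3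
    - (Complex.I * (4 * y * mu ^ 2 + t + 2 * y ^ 2)) • pauli2
    - (2 * v * mu + 1 / (2 * mu)) • pauli1

lemma re_sqrt_pos {z : ℂ} (hz : z ∈ Complex.slitPlane) :
    0 < (z ^ ((1 : ℂ)/2)).re := by
  have hz0 : z ≠ 0 := Complex.slitPlane_ne_zero hz
  rw [Complex.cpow_def_of_ne_zero hz0, Complex.exp_re]
  apply mul_pos (Real.exp_pos _)
  have him : (Complex.log z * ((1:ℂ)/2)).im = z.arg / 2 := by
    simp [Complex.mul_im, Complex.log_im]
    ring
  rw [him]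
  apply Real.cos_pos_of_mem_Ioo
  constructor
  · have := Complex.neg_pi_lt_arg z
    linarith
  · have h1 := Complex.arg_le_pi z
    have h2 := Complex.slitPlane_arg_ne_pi hz
    have : z.arg < Real.pi := lt_of_le_of_ne h1 h2
    linarith

theorem stmt5 (t y v : ℂ) (Ψ : ℂ → Fin 2 → ℂ)
    (hΨ : ∀ mu : ℂ, 0 < mu.re → HasDerivAt Ψ ((laxA y v t mu).mulVec (Ψ mu)) mu)
    (Φ : ℂ → Fin 2 → ℂ)
    (hΦ : ∀ lam : ℂ, Φ lam =
      (Matrix.diagonal ![lam ^ ((1 : ℂ) / 4), lam ^ (-((1 : ℂ) / 4))] *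
        (((Real.sqrt 2 : ℂ))⁻¹ • (pauli3 + pauli1))).mulVec (Ψ (lam ^ ((1 : ℂ) / 2)))) :
    DifferentiableOn ℂ Φ Complex.slitPlane ∧
    ∀ lam ∈ Complex.slitPlane,
      HasDerivAt Φ
        ((!![-v, 2 * lam ^ 2 + 2 * y * lam + t + 2 * y ^ 2;
             2 * (lam - y), v]).mulVec (Φ lam)) lam := by
  set c : ℂ := ((Real.sqrt 2 : ℂ))⁻¹ with hc
  have hΦ0 : ∀ l : ℂ, Φ l 0 =
      c * (l ^ ((1:ℂ)/4) * (Ψ (l ^ ((1:ℂ)/2)) 0 + Ψ (l ^ ((1:ℂ)/2)) 1)) := by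
    intro l
    rw [hΦ]
    simp [pauli1, pauli3, Matrix.mulVec, Matrix.mul_apply, Fin.sum_univ_two,
      Matrix.diagonal]
    ring
  have hΦ1 : ∀ l : ℂ, Φ l 1 =
      c * (l ^ (-((1:ℂ)/4)) * (Ψ (l ^ ((1:ℂ)/2)) 0 - Ψ (l ^ ((1:ℂ)/2)) 1)) := by
    intro l
    rw [hΦ]
    simp [pauli1, pauli3, Matrix.mulVec, Matrix.mul_apply, Fin.sum_univ_two,
      Matrix.diagonal]
    ring
  have main : ∀ lam ∈ Complex.slitPlane,
      HasDerivAt Φ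
        ((!![-v, 2 * lam ^ 2 + 2 * y * lam + t + 2 * y ^ 2;
             2 * (lam - y), v]).mulVec (Φ lam)) lam := by
    intro lam hlam
    have hl0 : lam ≠ 0 := Complex.slitPlane_ne_zero hlam
    set μ : ℂ := lam ^ ((1:ℂ)/2) with hμ
    set a : ℂ := lam ^ ((1:ℂ)/4) with ha
    have hμre : 0 < μ.re := re_sqrt_pos hlam
    have ha0 : a ≠ 0 := by
      rw [ha]
      intro h
      rcases (Complex.cpow_eq_zero_iff _ _).mp h with ⟨h1, _⟩
      exact hl0 h1
    have haa : a * a = μ := by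
      rw [ha, hμ, ← Complex.cpow_add _ _ hl0]
      norm_num
    have hlam_eq : a * a * (a * a) = lam := by
      rw [haa, hμ, ← Complex.cpow_add _ _ hl0]
      norm_num
    have hinv : lam ^ (-((1:ℂ)/4)) = a⁻¹ := by
      rw [Complex.cpow_neg, ha]
    have hq1 : lam ^ ((1:ℂ)/4 - 1) = a * lam⁻¹ := by
      have : (1:ℂ)/4 - 1 = 1/4 + (-1) := by ring
      rw [this, Complex.cpow_add _ _ hl0, Complex.cpow_neg_one, ha]
    have hqm : lam ^ (-((1:ℂ)/4) - 1) = a⁻¹ * lam⁻¹ := by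
      have : -((1:ℂ)/4) - 1 = -(1/4) + (-1) := by ring
      rw [this, Complex.cpow_add _ _ hl0, Complex.cpow_neg_one, hinv]
    have hq2 : lam ^ ((1:ℂ)/2 - 1) = μ * lam⁻¹ := by
      have : (1:ℂ)/2 - 1 = 1/2 + (-1) := by ring
      rw [this, Complex.cpow_add _ _ hl0, Complex.cpow_neg_one, hμ]
    -- derivative of μ(l) = l^{1/2}
    have hsqrt : HasDerivAt (fun l : ℂ => l ^ ((1:ℂ)/2))
        ((1/2) * lam ^ ((1:ℂ)/2 - 1)) lam :=
      (Complex.hasStrictDerivAt_cpow_const hlam).hasDerivAt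
    have hquarter : HasDerivAt (fun l : ℂ => l ^ ((1:ℂ)/4))
        ((1/4) * lam ^ ((1:ℂ)/4 - 1)) lam := by
      have := (Complex.hasStrictDerivAt_cpow_const (c := (1:ℂ)/4) hlam).hasDerivAt
      simpa using this
    have hquarterm : HasDerivAt (fun l : ℂ => l ^ (-((1:ℂ)/4)))
        (-((1:ℂ)/4) * lam ^ (-((1:ℂ)/4) - 1)) lam :=
      (Complex.hasStrictDerivAt_cpow_const (c := -((1:ℂ)/4)) hlam).hasDerivAt
    -- derivative of Ψ(l^{1/2})
    have hΨμ := hΨ μ hμre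
    have hcomp : HasDerivAt (fun l : ℂ => Ψ (l ^ ((1:ℂ)/2)))
        (((1/2) * lam ^ ((1:ℂ)/2 - 1)) • (laxA y v t μ).mulVec (Ψ μ)) lam := by
      exact HasDerivAt.scomp lam hΨμ hsqrt
    have hψ : ∀ i : Fin 2, HasDerivAt (fun l : ℂ => Ψ (l ^ ((1:ℂ)/2)) i)
        ((1/2) * lam ^ ((1:ℂ)/2 - 1) * ((laxA y v t μ).mulVec (Ψ μ)) i) lam := by
      intro i
      have := hasDerivAt_pi.mp hcomp i
      simpa using this
    -- entries of laxA.mulVec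
    have hA0 : ((laxA y v t μ).mulVec (Ψ μ)) 0 =
        (4 * μ ^ 4 + t + 2 * y ^ 2) * Ψ μ 0
          + (-(4 * y * μ ^ 2 + t + 2 * y ^ 2) - (2 * v * μ + 1 / (2 * μ))) * Ψ μ 1 := by
      simp only [laxA, pauli1, pauli2, pauli3, Matrix.mulVec, Matrix.sub_apply,
        Matrix.smul_apply, Matrix.of_apply, Matrix.cons_val', Matrix.cons_val_zero,
        Matrix.cons_val_one, Matrix.head_cons, Matrix.empty_val', Matrix.cons_val_fin_one,
        Matrix.head_fin_const, smul_eq_mul, Fin.isValue, dotProduct, Fin.sum_univ_two]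
      linear_combination (4 * y * μ ^ 2 + t + 2 * y ^ 2) * Ψ μ 1 * Complex.I_sq
    have hA1 : ((laxA y v t μ).mulVec (Ψ μ)) 1 =
        ((4 * y * μ ^ 2 + t + 2 * y ^ 2) - (2 * v * μ + 1 / (2 * μ))) * Ψ μ 0
          - (4 * μ ^ 4 + t + 2 * y ^ 2) * Ψ μ 1 := by
      simp only [laxA, pauli1, pauli2, pauli3, Matrix.mulVec, Matrix.sub_apply,
        Matrix.smul_apply, Matrix.of_apply, Matrix.cons_val', Matrix.cons_val_zero,
        Matrix.cons_val_one, Matrix.head_cons, Matrix.empty_val', Matrix.cons_val_fin_one,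
        Matrix.head_fin_const, smul_eq_mul, Fin.isValue, dotProduct, Fin.sum_univ_two]
      linear_combination -(4 * y * μ ^ 2 + t + 2 * y ^ 2) * Ψ μ 0 * Complex.I_sq
    -- derivative of component 0
    have hF0 : HasDerivAt (fun l : ℂ =>
        c * (l ^ ((1:ℂ)/4) * (Ψ (l ^ ((1:ℂ)/2)) 0 + Ψ (l ^ ((1:ℂ)/2)) 1)))
        (c * ((1/4) * lam ^ ((1:ℂ)/4 - 1) * (Ψ μ 0 + Ψ μ 1)
          + lam ^ ((1:ℂ)/4) *
            ((1/2) * lam ^ ((1:ℂ)/2 - 1) * ((laxA y v t μ).mulVec (Ψ μ)) 0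
              + (1/2) * lam ^ ((1:ℂ)/2 - 1) * ((laxA y v t μ).mulVec (Ψ μ)) 1))) lam := by
      exact (HasDerivAt.mul hquarter ((hψ 0).add (hψ 1))).const_mul c
    have hF1 : HasDerivAt (fun l : ℂ =>
        c * (l ^ (-((1:ℂ)/4)) * (Ψ (l ^ ((1:ℂ)/2)) 0 - Ψ (l ^ ((1:ℂ)/2)) 1)))
        (c * ((-((1:ℂ)/4)) * lam ^ (-((1:ℂ)/4) - 1) * (Ψ μ 0 - Ψ μ 1)
          + lam ^ (-((1:ℂ)/4)) *
            ((1/2) * lam ^ ((1:ℂ)/2 - 1) * ((laxA y v t μ).mulVec (Ψ μ)) 0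
              - (1/2) * lam ^ ((1:ℂ)/2 - 1) * ((laxA y v t μ).mulVec (Ψ μ)) 1))) lam := by
      exact (HasDerivAt.mul hquarterm ((hψ 0).sub (hψ 1))).const_mul c
    -- transfer to Φ components
    have heq0 : (fun l : ℂ => Φ l 0) =
        fun l : ℂ => c * (l ^ ((1:ℂ)/4) * (Ψ (l ^ ((1:ℂ)/2)) 0 + Ψ (l ^ ((1:ℂ)/2)) 1)) :=
      funext fun l => hΦ0 l
    have heq1 : (fun l : ℂ => Φ l 1) =
        fun l : ℂ => c * (l ^ (-((1:ℂ)/4)) * (Ψ (l ^ ((1:ℂ)/2)) 0 - Ψ (l ^ ((1:ℂ)/2)) 1)) :=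
      funext fun l => hΦ1 l
    apply hasDerivAt_pi.mpr
    intro i
    fin_cases i
    · show HasDerivAt (fun l : ℂ => Φ l 0)
        (((!![-v, 2 * lam ^ 2 + 2 * y * lam + t + 2 * y ^ 2;
             2 * (lam - y), v]).mulVec (Φ lam)) 0) lam
      have htarget : ((!![-v, 2 * lam ^ 2 + 2 * y * lam + t + 2 * y ^ 2;
             2 * (lam - y), v]).mulVec (Φ lam)) 0 =
          -v * Φ lam 0 + (2 * lam ^ 2 + 2 * y * lam + t + 2 * y ^ 2) * Φ lam 1 := by
        simp [Matrix.mulVec, dotProduct, Fin.sum_univ_two]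
      rw [htarget, hΦ0 lam, hΦ1 lam, heq0]
      convert hF0 using 1
      rw [hA0, hA1, hq1, hq2, hinv, ← hμ, ← ha]
      set P := Ψ μ 0 with hP
      set Q := Ψ μ 1 with hQ
      rw [← haa, ← hlam_eq]
      have h1 : a * a⁻¹ = 1 := mul_inv_cancel₀ ha0
      field_simp [ha0]
      ring
    · show HasDerivAt (fun l : ℂ => Φ l 1)
        (((!![-v, 2 * lam ^ 2 + 2 * y * lam + t + 2 * y ^ 2;
             2 * (lam - y), v]).mulVec (Φ lam)) 1) lam
      have htarget : ((!![-v, 2 * lam ^ 2 + 2 * y * lam + t + 2 * y ^ 2;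
             2 * (lam - y), v]).mulVec (Φ lam)) 1 =
          2 * (lam - y) * Φ lam 0 + v * Φ lam 1 := by
        simp [Matrix.mulVec, dotProduct, Fin.sum_univ_two]
      rw [htarget, hΦ0 lam, hΦ1 lam, heq1]
      convert hF1 using 1
      rw [hA0, hA1, hqm, hq2, hinv, ← hμ, ← ha]
      set P := Ψ μ 0 with hP
      set Q := Ψ μ 1 with hQ
      rw [← haa, ← hlam_eq]
      have h1 : a * a⁻¹ = 1 := mul_inv_cancel₀ ha0
      field_simp [ha0]
      ring
  exact ⟨fun lam hlam => ((main lam hlam).differentiableAt).differentiableWithinAt, main⟩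

end
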